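/- Let G = (V,E) be a graph, v ∈ V with N3(v) ≠ ∅, and let G' be the graph obtained from G by removing the vertices N2(v) ∪ N3(v) and adding a new vertex v' adjacent only to v. Then the domination numbers satisfy γ(G) = γ(G'). -/

import Mathlib

open Set

variable {V : Type*}

/-- Closed neighborhood N[v]. -/
def closedNbr (G : SimpleGraph V) (v : V) : Set V := insert v (G.neighborSet v)

/-- N1(v) = {u ∈ N(v) : N(u) \ N[v] ≠ ∅}. -/
def N1 (G : SimpleGraph V) (v : V) : Set V :=
  {u | u ∈ G.neighborSet v ∧ (G.neighborSet u \ closedNbr G v).Nonempty}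

/-- N2(v) = {u ∈ N(v) \ N1(v) : N(u) ∩ N1(v) ≠ ∅}. -/
def N2 (G : SimpleGraph V) (v : V) : Set V :=
  {u | u ∈ G.neighborSet v \ N1 G v ∧ (G.neighborSet u ∩ N1 G v).Nonempty}

/-- N3(v) = N(v) \ (N1(v) ∪ N2(v)). -/
def N3 (G : SimpleGraph V) (v : V) : Set V :=
  G.neighborSet v \ (N1 G v ∪ N2 G v)

/-- D is a dominating set: every vertex outside D has a neighbor in D. -/
def IsDomSet (G : SimpleGraph V) (D : Set V) : Prop :=
  ∀ u, u ∉ D → ∃ d ∈ D, G.Adj u d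

/-- The domination number γ(G). -/
noncomputable def domNum (G : SimpleGraph V) : ℕ :=
  sInf {n | ∃ D : Set V, IsDomSet G D ∧ D.ncard = n}

/-- The graph obtained from `G` by applying Rule 1 at `v`: the vertices of
`N2(v) ∪ N3(v)` are removed, and a fresh vertex (represented by `none`)
is added, adjacent only to `v`. -/
def ruleOneGraph (G : SimpleGraph V) (v : V) :
    SimpleGraph (Option {x : V // x ∉ N2 G v ∪ N3 G v}) where
  Adj a b :=
    match a, b with
    | some x, some y => G.Adj x.val y.val
    | some x, none => x.val = v
    | none, some y => y.val = v
    | none, none => False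
  symm := by
    constructor
    intro a b h
    cases a <;> cases b <;> simp_all
    exact h.symm
  loopless := by
    constructor
    intro a
    cases a <;> simp

/-!
Every vertex of `N2(v) ∪ N3(v) = N(v) \ N1(v)` has its closed neighbourhood inside `N[v]`, so in a
dominating set it can be traded for `v`. Since `N3(v) ≠ ∅`, a minimum dominating set of `G` must
contain `v` or such a vertex: a vertex `u ∈ N3(v)` is dominated from `N[v]`, and not from `N1(v)`,
as otherwise `u ∈ N2(v)`. Hence `G` has a minimum dominating set containing `v`; without the
removed vertices it dominates `G'`, since these are adjacent only to vertices of `N[v]`. Conversely a dominating set of `G'` contains `v` or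
`v'`, and replacing `v'` by `v` gives a dominating set of `G`.
-/

lemma domNum_le_ncard {G : SimpleGraph V} {D : Set V} (hD : IsDomSet G D) :
    domNum G ≤ D.ncard :=
  Nat.sInf_le ⟨D, hD, rfl⟩

lemma exists_isDomSet_ncard_eq_domNum (G : SimpleGraph V) :
    ∃ D : Set V, IsDomSet G D ∧ D.ncard = domNum G := by
  have hne : {n | ∃ D : Set V, IsDomSet G D ∧ D.ncard = n}.Nonempty :=
    ⟨univ.ncard, univ, fun u hu => absurd (mem_univ u) hu, rfl⟩
  exact Nat.sInf_mem hne

lemma ncard_image_some_preimage_val_le [Finite V] {p : V → Prop} (D : Set V) :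
    (some '' (Subtype.val ⁻¹' D : Set (Subtype p))).ncard ≤ D.ncard := by
  rw [ncard_image_of_injective _ (Option.some_injective _)]
  exact ncard_le_ncard_of_injOn Subtype.val (fun _ h => h) Subtype.val_injective.injOn

lemma IsDomSet.insert_diff_singleton {G : SimpleGraph V} {D : Set V} (hD : IsDomSet G D)
    {v w : V} (hwv : closedNbr G w ⊆ closedNbr G v) :
    IsDomSet G (insert v (D \ {w})) := by
  have adj_v : ∀ u ∈ closedNbr G w, u ∉ insert v (D \ {w}) → G.Adj u v := fun u hu hu' =>
    ((hwv hu).resolve_left fun h => hu' (Or.inl h)).symm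
  intro u hu
  by_cases huw : u = w
  · exact ⟨v, mem_insert v _, adj_v u (Or.inl huw) hu⟩
  obtain ⟨d, hdD, hud⟩ := hD u fun huD => hu (Or.inr ⟨huD, huw⟩)
  by_cases hdw : d = w
  · exact ⟨v, mem_insert v _, adj_v u (Or.inr (hdw ▸ hud.symm)) hu⟩
  · exact ⟨d, Or.inr ⟨hdD, hdw⟩, hud⟩

section Partition

variable {G : SimpleGraph V} {v : V}

lemma N2_union_N3 : N2 G v ∪ N3 G v = G.neighborSet v \ N1 G v := by
  ext u
  constructor
  · rintro (h | h)
    · exact h.1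
    · exact ⟨h.1, fun h1 => h.2 (Or.inl h1)⟩
  · intro h
    by_cases h2 : u ∈ N2 G v
    · exact Or.inl h2
    · exact Or.inr ⟨h.1, fun h12 => h12.elim h.2 h2⟩

lemma neighborSet_subset_closedNbr_of_notMem_N1 {u : V} (hu : u ∈ G.neighborSet v)
    (hu1 : u ∉ N1 G v) : G.neighborSet u ⊆ closedNbr G v := fun w hw => by
  by_contra hwv
  exact hu1 ⟨hu, w, hw, hwv⟩

lemma closedNbr_subset_closedNbr_of_notMem_N1 {u : V} (hu : u ∈ G.neighborSet v)
    (hu1 : u ∉ N1 G v) : closedNbr G u ⊆ closedNbr G v :=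
  insert_subset (Or.inr hu) (neighborSet_subset_closedNbr_of_notMem_N1 hu hu1)

lemma notMem_N2_union_N3_self : v ∉ N2 G v ∪ N3 G v := by
  rw [N2_union_N3]
  exact fun h => G.loopless.irrefl v h.1

lemma exists_mem_closedNbr_subset_of_N3_nonempty (h : (N3 G v).Nonempty) {D : Set V}
    (hD : IsDomSet G D) : ∃ w ∈ D, closedNbr G w ⊆ closedNbr G v := by
  obtain ⟨u, hu⟩ := h
  have hu' : u ∈ G.neighborSet v \ N1 G v := N2_union_N3 (v := v) ▸ Or.inr hu
  by_cases huD : u ∈ D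
  · exact ⟨u, huD, closedNbr_subset_closedNbr_of_notMem_N1 hu'.1 hu'.2⟩
  obtain ⟨d, hdD, hud⟩ := hD u huD
  refine ⟨d, hdD, ?_⟩
  rcases neighborSet_subset_closedNbr_of_notMem_N1 hu'.1 hu'.2 hud with rfl | hdv
  · exact subset_rfl
  · have hd1 : d ∉ N1 G v := fun hd1 => hu.2 (Or.inr ⟨hu', d, hud, hd1⟩)
    exact closedNbr_subset_closedNbr_of_notMem_N1 hdv hd1

end Partition

section RuleOne

variable {G : SimpleGraph V} {v : V}

def ruleOneProj (G : SimpleGraph V) (v : V) : Option {x : V // x ∉ N2 G v ∪ N3 G v} → V :=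
  fun a => a.elim v Subtype.val

lemma isDomSet_image_ruleOneProj {D' : Set (Option {x : V // x ∉ N2 G v ∪ N3 G v})}
    (hD' : IsDomSet (ruleOneGraph G v) D') : IsDomSet G (ruleOneProj G v '' D') := by
  have hv : v ∈ ruleOneProj G v '' D' := by
    by_cases hn : none ∈ D'
    · exact ⟨none, hn, rfl⟩
    obtain ⟨d, hdD, hadj⟩ := hD' none hn
    cases d with
    | none => exact hadj.elim
    | some y => exact ⟨some y, hdD, hadj.symm⟩
  intro u hu
  by_cases huv : u ∈ closedNbr G v
  · rcases huv with rfl | huv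
    · exact absurd hv hu
    · exact ⟨v, hv, huv.symm⟩
  have huS : u ∉ N2 G v ∪ N3 G v := fun h => huv (Or.inr (N2_union_N3 (v := v) ▸ h).1)
  obtain ⟨d, hdD, hadj⟩ := hD' (some ⟨u, huS⟩) fun h => hu ⟨_, h, rfl⟩
  cases d with
  | none => exact absurd (Or.inl hadj) huv
  | some y => exact ⟨y, ⟨some y, hdD, rfl⟩, hadj⟩

lemma isDomSet_ruleOneGraph_of_mem {D : Set V} (hD : IsDomSet G D) (hv : v ∈ D) :
    IsDomSet (ruleOneGraph G v) (some '' (Subtype.val ⁻¹' D)) := by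
  have hvS : v ∉ N2 G v ∪ N3 G v := notMem_N2_union_N3_self
  have hv' : some (⟨v, hvS⟩ : {x // x ∉ N2 G v ∪ N3 G v}) ∈ some '' (Subtype.val ⁻¹' D) :=
    ⟨_, hv, rfl⟩
  rintro (_ | x) hx
  · exact ⟨_, hv', rfl⟩
  have hxD : x.val ∉ D := fun h => hx ⟨x, h, rfl⟩
  by_cases hxv : x.val ∈ closedNbr G v
  · rcases hxv with hxv | hxv
    · exact absurd (hxv.symm ▸ hv) hxD
    · exact ⟨_, hv', hxv.symm⟩
  obtain ⟨d, hdD, hxd⟩ := hD x.val hxD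
  have hdS : d ∉ N2 G v ∪ N3 G v := fun hd => by
    rw [N2_union_N3] at hd
    exact hxv (neighborSet_subset_closedNbr_of_notMem_N1 hd.1 hd.2 hxd.symm)
  exact ⟨some ⟨d, hdS⟩, ⟨_, hdD, rfl⟩, hxd⟩

end RuleOne

theorem stmt_4 [Fintype V] (G : SimpleGraph V) (v : V) (h : (N3 G v).Nonempty) :
    domNum G = domNum (ruleOneGraph G v) := by
  apply le_antisymm
  · obtain ⟨D', hD', hcard⟩ := exists_isDomSet_ncard_eq_domNum (ruleOneGraph G v)
    calc domNum G ≤ (ruleOneProj G v '' D').ncard :=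
          domNum_le_ncard (isDomSet_image_ruleOneProj hD')
      _ ≤ D'.ncard := ncard_image_le
      _ = domNum (ruleOneGraph G v) := hcard
  · obtain ⟨D, hD, hcard⟩ := exists_isDomSet_ncard_eq_domNum G
    obtain ⟨w, hwD, hwv⟩ := exists_mem_closedNbr_subset_of_N3_nonempty h hD
    set D₁ := insert v (D \ {w})
    have hD₁ : IsDomSet (ruleOneGraph G v) (some '' (Subtype.val ⁻¹' D₁)) :=
      isDomSet_ruleOneGraph_of_mem (hD.insert_diff_singleton hwv) (mem_insert v _)
    calc domNum (ruleOneGraph G v) ≤ (some '' (Subtype.val ⁻¹' D₁)).ncard := domNum_le_ncard hD₁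
      _ ≤ D₁.ncard := ncard_image_some_preimage_val_le D₁
      _ ≤ (D \ {w}).ncard + 1 := ncard_insert_le v _
      _ = D.ncard := ncard_sdiff_singleton_add_one hwD
      _ = domNum G := hcard
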